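/- arXiv:2303.06595 — 2 statements merged into one kernel-verified Lean document; each statement's English description precedes it below -/
import Mathlib

section
/- Suppose the Luo-Tseng error bound holds on the feasible set: there is τ > 0 with dist(π, X) ≤ τ ‖π - proj_{C}(π + D_X π D_Y)‖ for all π ∈ C, where C = C_1 ∩ C_2. Then the bound extends to all of ℝ^{n×m}: for every π ∈ ℝ^{n×m}, dist(π, X) ≤ (τ L + 2τ + 1) ‖π - proj_C(π + D_X π D_Y)‖, where L = σ_max(D_X) σ_max(D_Y). -/
open RealInnerProductSpace

/-- The linear map `π ↦ D_X π D_Y` on `ℝ^{n×m}` (viewed as a Euclidean space). -/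
noncomputable def matMulDXDY {n m : ℕ} (DX : Matrix (Fin n) (Fin n) ℝ)
    (DY : Matrix (Fin m) (Fin m) ℝ) (π : EuclideanSpace ℝ (Fin n × Fin m)) :
    EuclideanSpace ℝ (Fin n × Fin m) :=
  WithLp.toLp 2 (fun p : Fin n × Fin m => ∑ j, ∑ l, DX p.1 j * π (j, l) * DY l p.2)

lemma proj_varineq {E : Type*} [NormedAddCommGroup E] [InnerProductSpace ℝ E]
    {C : Set E} (hCcv : Convex ℝ C) (hCne : C.Nonempty)
    (projC : E → E) (hproj : ∀ u, projC u ∈ C ∧ ∀ w ∈ C, ‖u - projC u‖ ≤ ‖u - w‖)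
    (u : E) : ∀ w ∈ C, inner ℝ (u - projC u) (w - projC u) ≤ (0:ℝ) := by
  haveI : Nonempty C := hCne.to_subtype
  have hinf : ‖u - projC u‖ = ⨅ w : C, ‖u - (w : E)‖ := by
    refine le_antisymm (le_ciInf fun w => (hproj u).2 w w.2) ?_
    exact ciInf_le ⟨0, by rintro x ⟨w, rfl⟩; positivity⟩ (⟨projC u, (hproj u).1⟩ : C)
  exact (norm_eq_iInf_iff_real_inner_le_zero hCcv (hproj u).1).mp hinf

lemma proj_nonexp {E : Type*} [NormedAddCommGroup E] [InnerProductSpace ℝ E]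
    {C : Set E} (hCcv : Convex ℝ C) (hCne : C.Nonempty)
    (projC : E → E) (hproj : ∀ u, projC u ∈ C ∧ ∀ w ∈ C, ‖u - projC u‖ ≤ ‖u - w‖)
    (u v : E) : ‖projC u - projC v‖ ≤ ‖u - v‖ := by
  set p := projC u
  set q := projC v
  have h1 : inner ℝ (u - p) (q - p) ≤ (0:ℝ) := proj_varineq hCcv hCne projC hproj u q (hproj v).1
  have h2 : inner ℝ (v - q) (p - q) ≤ (0:ℝ) := proj_varineq hCcv hCne projC hproj v p (hproj u).1
  have key : (inner ℝ (p - q) (p - q) : ℝ) ≤ inner ℝ (u - v) (p - q) := by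
    have h1' : inner ℝ (p - u) (p - q) ≤ (0:ℝ) := by
      have : q - p = -(p - q) := by abel
      rw [this, inner_neg_right] at h1
      have : u - p = -(p - u) := by abel
      rw [this, inner_neg_left] at h1
      linarith
    have hsum : inner ℝ ((p - u) + (v - q)) (p - q) ≤ (0:ℝ) := by
      rw [inner_add_left]; linarith
    have heq : (p - u) + (v - q) = (p - q) - (u - v) := by abel
    rw [heq, inner_sub_left] at hsum
    linarith
  have hle : ‖p - q‖ ^ 2 ≤ ‖u - v‖ * ‖p - q‖ := by
    calc ‖p - q‖ ^ 2 = (inner ℝ (p - q) (p - q) : ℝ) := (real_inner_self_eq_norm_sq _).symm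
    _ ≤ inner ℝ (u - v) (p - q) := key
    _ ≤ ‖u - v‖ * ‖p - q‖ := real_inner_le_norm _ _
  rcases eq_or_lt_of_le (norm_nonneg (p - q)) with h | h
  · rw [← h]; exact norm_nonneg _
  · nlinarith

/-- If the Luo–Tseng error bound
`dist(π, X) ≤ τ ‖π - proj_C(π + D_X π D_Y)‖` holds for all `π` in the feasible set
`C = C₁ ∩ C₂`, then for every `π ∈ ℝ^{n×m}`,
`dist(π, X) ≤ (τL + 2τ + 1) ‖π - proj_C(π + D_X π D_Y)‖`, where `L = σ_max(D_X)σ_max(D_Y)`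
is a Lipschitz constant of `π ↦ D_X π D_Y`. -/
theorem stmt_9 {n m : ℕ} (DX : Matrix (Fin n) (Fin n) ℝ) (DY : Matrix (Fin m) (Fin m) ℝ)
    (C X : Set (EuclideanSpace ℝ (Fin n × Fin m)))
    (hCcl : IsClosed C) (hCcv : Convex ℝ C) (hCne : C.Nonempty)
    (hXne : X.Nonempty) (hXcl : IsClosed X) (hXC : X ⊆ C)
    (τ L : ℝ) (hτ : 0 < τ) (hL : 0 ≤ L)
    (hLip : ∀ a b : EuclideanSpace ℝ (Fin n × Fin m),
      ‖matMulDXDY DX DY a - matMulDXDY DX DY b‖ ≤ L * ‖a - b‖)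
    (projC : EuclideanSpace ℝ (Fin n × Fin m) → EuclideanSpace ℝ (Fin n × Fin m))
    (hproj : ∀ u, projC u ∈ C ∧ ∀ w ∈ C, ‖u - projC u‖ ≤ ‖u - w‖)
    (heb : ∀ π ∈ C, Metric.infDist π X ≤ τ * ‖π - projC (π + matMulDXDY DX DY π)‖) :
    ∀ π : EuclideanSpace ℝ (Fin n × Fin m),
      Metric.infDist π X ≤ (τ * L + 2 * τ + 1) * ‖π - projC (π + matMulDXDY DX DY π)‖ := by
  intro π
  set F := matMulDXDY DX DY with hF
  set q := projC (π + F π) with hqdef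
  have hqC : q ∈ C := (hproj _).1
  have step1 : Metric.infDist π X ≤ Metric.infDist q X + dist π q :=
    Metric.infDist_le_infDist_add_dist
  have step2 := heb q hqC
  have step3 : ‖q - projC (q + F q)‖ ≤ (1 + L) * ‖π - q‖ := by
    calc ‖q - projC (q + F q)‖ = ‖projC (π + F π) - projC (q + F q)‖ := by rw [hqdef]
    _ ≤ ‖(π + F π) - (q + F q)‖ := proj_nonexp hCcv hCne projC hproj _ _
    _ = ‖(π - q) + (F π - F q)‖ := by congr 1; abel
    _ ≤ ‖π - q‖ + ‖F π - F q‖ := norm_add_le _ _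
    _ ≤ ‖π - q‖ + L * ‖π - q‖ := by linarith [hLip π q]
    _ = (1 + L) * ‖π - q‖ := by ring
  have hd : dist π q = ‖π - q‖ := dist_eq_norm _ _
  have hn : 0 ≤ ‖π - q‖ := norm_nonneg _
  nlinarith [step1, step2, step3]
end

section
/- Fixed-point infeasibility bound: suppose (π*, w*) satisfies ∇f(w*) + ρ(∇h(π*) - ∇h(w*)) + p = 0 with p ∈ N_{C_1}(π*), and ∇f(π*) + ρ(∇h(w*) - ∇h(π*)) + q = 0 with q ∈ N_{C_2}(w*), where h is σ-strongly convex, ‖∇f‖ ≤ L_f on the relevant bounded region, and the pair (C_1, C_2) is boundedly linearly regular with constant κ. Then ‖π* - w*‖ ≤ (2κ+1)L_f/(σρ). -/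
open RealInnerProductSpace


lemma my_first_order {E : Type*} [NormedAddCommGroup E] [InnerProductSpace ℝ E] [CompleteSpace E]
    (g : E → ℝ) (g' x y : E) (hg : HasGradientAt g g' x)
    (hc : ConvexOn ℝ Set.univ g) : ⟪g', y - x⟫ ≤ g y - g x := by
  set v := y - x with hv
  have hcv : ∀ t : ℝ, HasDerivAt (fun t : ℝ => x + t • v) v t := fun t => by
    simpa using ((hasDerivAt_id t).smul_const v).const_add x
  have hφ : HasDerivAt (fun t : ℝ => g (x + t • v)) ⟪g', v⟫ 0 := by
    have h0 : HasFDerivAt g (InnerProductSpace.toDual ℝ E g') (x + (0:ℝ) • v) := by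
      simpa using hg.hasFDerivAt
    have h3 := h0.comp_hasDerivAt 0 (hcv 0)
    simp only [InnerProductSpace.toDual_apply_apply] at h3
    exact h3
  have ht : Filter.Tendsto (slope (fun t : ℝ => g (x + t • v)) 0) (nhdsWithin 0 (Set.Ioi 0))
      (nhds ⟪g', v⟫) :=
    (hasDerivAt_iff_tendsto_slope.mp hφ).mono_left
      (nhdsWithin_mono _ (fun t ht => ne_of_gt ht))
  have hle : ⟪g', v⟫ ≤ g y - g x := by
    refine le_of_tendsto ht ?_
    filter_upwards [Ioc_mem_nhdsGT_of_mem (Set.mem_Ico.mpr ⟨le_refl (0:ℝ), zero_lt_one⟩)]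
      with t ht
    have hxt : x + t • v = (1 - t) • x + t • y := by
      rw [hv]; module
    have hconv := hc.2 (Set.mem_univ x) (Set.mem_univ y)
      (by linarith [ht.2] : (0:ℝ) ≤ 1 - t) (le_of_lt ht.1) (by ring)
    rw [slope_def_field]
    have h1 : g (x + t • v) ≤ (1 - t) * g x + t * g y := by
      rw [hxt]; simpa [smul_eq_mul] using hconv
    have h2 : g (x + (0:ℝ) • v) = g x := by simp
    rw [h2, sub_zero, div_le_iff₀ ht.1]
    nlinarith [ht.1]
  exact hle

lemma my_strong_mono {E : Type*} [NormedAddCommGroup E] [InnerProductSpace ℝ E] [CompleteSpace E]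
    (h : E → ℝ) (h' : E → E) (σ : ℝ)
    (hh : ∀ x, HasGradientAt h (h' x) x)
    (hc : ConvexOn ℝ Set.univ (fun x => h x - σ / 2 * ‖x‖ ^ 2))
    (x y : E) : σ * ‖x - y‖ ^ 2 ≤ ⟪h' x - h' y, x - y⟫ := by
  have hgrad : ∀ z : E, HasGradientAt (fun w => h w - σ / 2 * ‖w‖ ^ 2) (h' z - σ • z) z := by
    intro z
    rw [hasGradientAt_iff_hasFDerivAt]
    have h1 : HasFDerivAt h (InnerProductSpace.toDual ℝ E (h' z)) z := (hh z).hasFDerivAt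
    have h2 : HasFDerivAt (fun w : E => σ / 2 * ‖w‖ ^ 2)
        (InnerProductSpace.toDual ℝ E (σ • z)) z := by
      have hi : HasFDerivAt (fun w : E => ⟪w, w⟫)
          ((fderivInnerCLM ℝ (z, z)).comp ((ContinuousLinearMap.id ℝ E).prod
            (ContinuousLinearMap.id ℝ E))) z :=
        (hasFDerivAt_id z).inner ℝ (hasFDerivAt_id z)
      have := hi.const_mul (σ / 2)
      have heqf : (fun w : E => σ / 2 * ⟪w, w⟫) = fun w : E => σ / 2 * ‖w‖ ^ 2 := by
        funext w; rw [real_inner_self_eq_norm_sq]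
      rw [heqf] at this
      refine HasFDerivAt.congr_fderiv this ?_
      ext v
      simp [fderivInnerCLM_apply, InnerProductSpace.toDual_apply_apply, real_inner_smul_left,
        real_inner_comm]
      ring
    have := h1.sub h2
    rw [← map_sub] at this
    exact this
  have k1 := my_first_order _ _ x y (hgrad x) hc
  have k2 := my_first_order _ _ y x (hgrad y) hc
  have e1 : ⟪h' x - σ • x, y - x⟫ = ⟪h' x, y - x⟫ - σ * ⟪x, y - x⟫ := by
    rw [inner_sub_left, real_inner_smul_left]
  have e2 : ⟪h' y - σ • y, x - y⟫ = ⟪h' y, x - y⟫ - σ * ⟪y, x - y⟫ := by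
    rw [inner_sub_left, real_inner_smul_left]
  rw [e1] at k1; rw [e2] at k2
  have hxy : ⟪h' y, x - y⟫ = -⟪h' y, y - x⟫ := by
    rw [← inner_neg_right]; congr 1; abel
  have hsum : ⟪h' x - h' y, x - y⟫ = -(⟪h' x, y - x⟫ + ⟪h' y, x - y⟫) := by
    rw [inner_sub_left, hxy]; ring_nf
    rw [show x - y = -(y - x) by abel, inner_neg_right]
    ring
  have hnorm : ⟪x - y, x - y⟫ = ‖x - y‖ ^ 2 := real_inner_self_eq_norm_sq _
  have hxx : ⟪x, y - x⟫ + ⟪y, x - y⟫ = -⟪x - y, x - y⟫ := by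
    rw [inner_sub_left]
    rw [show y - x = -(x - y) by abel, inner_neg_right]
    ring
  have hσx : σ * (⟪x, y - x⟫ + ⟪y, x - y⟫) = -(σ * ⟪x - y, x - y⟫) := by rw [hxx]; ring
  have hσx' : σ * ⟪x, y - x⟫ + σ * ⟪y, x - y⟫ = -(σ * ⟪x - y, x - y⟫) := by
    rw [← hσx]; ring
  have hσn : σ * ⟪x - y, x - y⟫ = σ * ‖x - y‖ ^ 2 := by rw [hnorm]
  linarith [k1, k2, hsum, hσx', hσn]

/-- Fixed-point infeasibility bound for BAPG. If `(π*, w*)` satisfies the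
fixed-point conditions `∇f(w*) + ρ(∇h(π*) - ∇h(w*)) + p = 0` with `p ∈ N_{C₁}(π*)` and
`∇f(π*) + ρ(∇h(w*) - ∇h(π*)) + q = 0` with `q ∈ N_{C₂}(w*)`, where `h` is `σ`-strongly
convex, `‖∇f‖ ≤ L_f` at the relevant points, and `(C₁, C₂)` is boundedly linearly regular
with constant `κ`, then `‖π* - w*‖ ≤ (2κ+1)L_f/(σρ)`. -/
theorem stmt_11 {n m : ℕ} (C1 C2 : Set (EuclideanSpace ℝ (Fin n × Fin m)))
    (hcl1 : IsClosed C1) (hcl2 : IsClosed C2) (hcv1 : Convex ℝ C1) (hcv2 : Convex ℝ C2)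
    (hne : (C1 ∩ C2).Nonempty) (hbdd : Bornology.IsBounded (C1 ∩ C2))
    (f h : EuclideanSpace ℝ (Fin n × Fin m) → ℝ)
    (f' h' : EuclideanSpace ℝ (Fin n × Fin m) → EuclideanSpace ℝ (Fin n × Fin m))
    (hfdiff : ∀ x, HasGradientAt f (f' x) x) (hhdiff : ∀ x, HasGradientAt h (h' x) x)
    (σ ρ κ Lf : ℝ) (hσ : 0 < σ) (hρ : 0 < ρ) (hκ : 0 ≤ κ) (hLf : 0 ≤ Lf)
    (hstrong : ConvexOn ℝ Set.univ (fun x => h x - σ / 2 * ‖x‖ ^ 2))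
    (hblr : ∀ x, Metric.infDist x (C1 ∩ C2)
      ≤ κ * max (Metric.infDist x C1) (Metric.infDist x C2))
    (πs ws : EuclideanSpace ℝ (Fin n × Fin m)) (hπs : πs ∈ C1) (hws : ws ∈ C2)
    (hgrad1 : ‖f' πs‖ ≤ Lf) (hgrad2 : ‖f' ws‖ ≤ Lf)
    (p q : EuclideanSpace ℝ (Fin n × Fin m))
    (hp : ∀ y ∈ C1, ⟪p, y - πs⟫ ≤ 0) (hq : ∀ y ∈ C2, ⟪q, y - ws⟫ ≤ 0)
    (heq1 : f' ws + ρ • (h' πs - h' ws) + p = 0)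
    (heq2 : f' πs + ρ • (h' ws - h' πs) + q = 0) :
    ‖πs - ws‖ ≤ (2 * κ + 1) * Lf / (σ * ρ) := by
  -- nearest point z in the intersection
  obtain ⟨z, hz, hzd⟩ := (hcl1.inter hcl2).exists_infDist_eq_dist hne πs
  -- distance bound : ‖πs - z‖ ≤ κ * ‖πs - ws‖
  have hd1 : Metric.infDist πs C1 = 0 := Metric.infDist_zero_of_mem hπs
  have hd2 : Metric.infDist πs C2 ≤ dist πs ws := Metric.infDist_le_dist_of_mem hws
  have hmax : max (Metric.infDist πs C1) (Metric.infDist πs C2) ≤ dist πs ws := by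
    rw [hd1]
    exact max_le dist_nonneg hd2
  have hzb : dist πs z ≤ κ * ‖πs - ws‖ := by
    rw [← hzd, ← dist_eq_norm]
    calc Metric.infDist πs (C1 ∩ C2) ≤ κ * max (Metric.infDist πs C1) (Metric.infDist πs C2) :=
          hblr πs
      _ ≤ κ * dist πs ws := mul_le_mul_of_nonneg_left hmax hκ
  have hzπ : ‖z - πs‖ ≤ κ * ‖πs - ws‖ := by rwa [← norm_sub_rev πs z, ← dist_eq_norm]
  have hzw : ‖z - ws‖ ≤ (κ + 1) * ‖πs - ws‖ := by
    calc ‖z - ws‖ = ‖(z - πs) + (πs - ws)‖ := by abel_nf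
      _ ≤ ‖z - πs‖ + ‖πs - ws‖ := norm_add_le _ _
      _ ≤ κ * ‖πs - ws‖ + ‖πs - ws‖ := by linarith
      _ = (κ + 1) * ‖πs - ws‖ := by ring
  -- normal cone inequalities at z
  have hp' : ⟪f' ws + ρ • (h' πs - h' ws), z - πs⟫ ≥ 0 := by
    have hpe : p = -(f' ws + ρ • (h' πs - h' ws)) := by
      have := heq1; linear_combination (norm := module) this
    have := hp z hz.1
    rw [hpe, inner_neg_left] at this
    linarith
  have hq' : ⟪f' πs + ρ • (h' ws - h' πs), z - ws⟫ ≥ 0 := by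
    have hqe : q = -(f' πs + ρ • (h' ws - h' πs)) := by
      linear_combination (norm := module) heq2
    have := hq z hz.2
    rw [hqe, inner_neg_left] at this
    linarith
  -- expand
  have hA : ⟪f' ws, z - πs⟫ + ρ * ⟪h' πs - h' ws, z - πs⟫ ≥ 0 := by
    rw [← real_inner_smul_left, ← inner_add_left]; exact hp'
  have hB : ⟪f' πs, z - ws⟫ + ρ * ⟪h' ws - h' πs, z - ws⟫ ≥ 0 := by
    rw [← real_inner_smul_left, ← inner_add_left]; exact hq'
  have hmono := my_strong_mono h h' σ hhdiff hstrong πs ws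
  -- combine: ρ⟪h'πs - h'ws, πs - ws⟫ ≤ ⟪f'ws, z-πs⟫ + ⟪f'πs, z-ws⟫
  have hrel : ⟪h' πs - h' ws, z - πs⟫ + ⟪h' ws - h' πs, z - ws⟫
      = -⟪h' πs - h' ws, πs - ws⟫ := by
    have : ⟪h' ws - h' πs, z - ws⟫ = -⟪h' πs - h' ws, z - ws⟫ := by
      rw [show h' ws - h' πs = -(h' πs - h' ws) by abel, inner_neg_left]
    rw [this, ← sub_eq_add_neg, ← inner_sub_right,
      show z - πs - (z - ws) = -(πs - ws) by abel, inner_neg_right]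
  have hcs1 : ⟪f' ws, z - πs⟫ ≤ Lf * (κ * ‖πs - ws‖) := by
    calc ⟪f' ws, z - πs⟫ ≤ ‖f' ws‖ * ‖z - πs‖ := real_inner_le_norm _ _
      _ ≤ Lf * (κ * ‖πs - ws‖) := by
          apply mul_le_mul hgrad2 hzπ (norm_nonneg _) hLf
  have hcs2 : ⟪f' πs, z - ws⟫ ≤ Lf * ((κ + 1) * ‖πs - ws‖) := by
    calc ⟪f' πs, z - ws⟫ ≤ ‖f' πs‖ * ‖z - ws‖ := real_inner_le_norm _ _
      _ ≤ Lf * ((κ + 1) * ‖πs - ws‖) := mul_le_mul hgrad1 hzw (norm_nonneg _) hLf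
  have hkey : σ * ρ * ‖πs - ws‖ ^ 2 ≤ (2 * κ + 1) * Lf * ‖πs - ws‖ := by
    have hρi : ρ * ⟪h' πs - h' ws, z - πs⟫ + ρ * ⟪h' ws - h' πs, z - ws⟫
        = -(ρ * ⟪h' πs - h' ws, πs - ws⟫) := by
      have : ρ * (⟪h' πs - h' ws, z - πs⟫ + ⟪h' ws - h' πs, z - ws⟫)
          = ρ * (-⟪h' πs - h' ws, πs - ws⟫) := by rw [hrel]
      linarith [this]
    have h1 : ρ * ⟪h' πs - h' ws, πs - ws⟫ ≤ ⟪f' ws, z - πs⟫ + ⟪f' πs, z - ws⟫ := by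
      linarith [hA, hB, hρi]
    have h2 : σ * ρ * ‖πs - ws‖ ^ 2 ≤ ρ * ⟪h' πs - h' ws, πs - ws⟫ := by
      have := mul_le_mul_of_nonneg_left hmono hρ.le
      linarith [this]
    linarith [h1, h2, hcs1, hcs2]
  rcases eq_or_lt_of_le (norm_nonneg (πs - ws)) with h0 | h0
  · rw [← h0]
    positivity
  · rw [le_div_iff₀ (mul_pos hσ hρ)]
    nlinarith [hkey, h0]
end
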